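/- Let B1 be an elementary block that is the parent of non-elementary block B2, with V = B1 ∪ B2, let A1 be an attractor of TS_{B1}, and let TS_2 be the transition system of B2 generated by basS(A1). If A is an attractor of TS_2 (hence of the global TS, with A|B1 = A1), then the strong basin of A computed in TS_2 equals the strong basin of A in the global transition system, and also equals basS(A1) ⊗ basS_{TS_2}(A). -/
import Mathlib


/-- Reachability: reflexive-transitive closure of the transition relation. -/
def reach {σ : Type*} (r : σ → σ → Prop) : σ → σ → Prop := Relation.ReflTransGen r

/-- An attractor: a set `A` with `reach(s) = A` for every `s ∈ A`. -/
def IsAttractor {σ : Type*} (r : σ → σ → Prop) (A : Set σ) : Prop :=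
  ∀ s ∈ A, {t | reach r s t} = A

/-- Weak basin of attraction. -/
def basW {σ : Type*} (r : σ → σ → Prop) (A : Set σ) : Set σ :=
  {s | ∃ t ∈ A, reach r s t}

/-- Strong basin of attraction. -/
def basS {σ : Type*} (r : σ → σ → Prop) (A : Set σ) : Set σ :=
  basW r A \ ⋃ A' ∈ {B : Set σ | IsAttractor r B ∧ B ≠ A}, basW r A'

variable {V : Type*} [Fintype V] [DecidableEq V]

/-- Asynchronous (global) transition relation of a Boolean network on node set `V`. -/
def gstep (f : (V → Bool) → V → Bool) (s s' : V → Bool) : Prop :=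
  ∃ v, s' = Function.update s v (f s v)

/-- A block `B` is elementary if the update function of every node of `B`
depends only on the nodes in `B`. -/
def Elem (f : (V → Bool) → V → Bool) (B : Set V) : Prop :=
  ∀ v ∈ B, ∀ s t : V → Bool, (∀ u ∈ B, s u = t u) → f s v = f t v

/-- Projection of a global state to a block. -/
def proj (B : Set V) (s : V → Bool) : {v // v ∈ B} → Bool := fun v => s v.1

/-- Local (asynchronous) transition relation of a block `B`: a node of `B` is updated,
using any global state extending the local one (for elementary `B` this is well defined). -/
def lstep (f : (V → Bool) → V → Bool) (B : Set V)
    (x x' : {v // v ∈ B} → Bool) : Prop :=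
  ∃ v : {v // v ∈ B}, ∃ s : V → Bool, proj B s = x ∧ x' = Function.update x v (f s v.1)

/-- Restriction of a transition relation to a set of states (a sub-transition-system). -/
def rrestrict {σ : Type*} (states : Set σ) (r : σ → σ → Prop) : σ → σ → Prop :=
  fun a b => r a b ∧ a ∈ states ∧ b ∈ states

/-- An attractor of the sub-transition-system with the given state set. -/
def IsAttractorOn {σ : Type*} (states : Set σ) (r : σ → σ → Prop) (A : Set σ) : Prop :=
  A ⊆ states ∧ ∀ s ∈ A, {t | reach (rrestrict states r) s t} = A

/-- Weak basin within a sub-transition-system. -/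
def basWOn {σ : Type*} (states : Set σ) (r : σ → σ → Prop) (A : Set σ) : Set σ :=
  {s | s ∈ states ∧ ∃ t ∈ A, reach (rrestrict states r) s t}

/-- Strong basin within a sub-transition-system. -/
def basSOn {σ : Type*} (states : Set σ) (r : σ → σ → Prop) (A : Set σ) : Set σ :=
  basWOn states r A \
    ⋃ A' ∈ {B : Set σ | IsAttractorOn states r B ∧ B ≠ A}, basWOn states r A'

section MyAux

variable {σ : Type*}

lemma reach_trans' {r : σ → σ → Prop} {a b c : σ} (h1 : reach r a b) (h2 : reach r b c) :
    reach r a c := Relation.ReflTransGen.trans h1 h2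

lemma exists_terminal [Finite σ] (r : σ → σ → Prop) (s : σ) :
    ∃ t, reach r s t ∧ ∀ u, reach r t u → reach r u t := by
  have key : ∀ n (s : σ), Set.ncard {u | reach r s u} ≤ n →
      ∃ t, reach r s t ∧ ∀ u, reach r t u → reach r u t := by
    intro n
    induction n with
    | zero =>
      intro s hs
      exfalso
      have hmem : s ∈ {u | reach r s u} := Relation.ReflTransGen.refl
      have hpos : 0 < Set.ncard {u | reach r s u} :=
        (Set.ncard_pos (Set.toFinite _)).mpr ⟨s, hmem⟩
      omega
    | succ n ih =>
      intro s hs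
      by_cases h : ∀ u, reach r s u → reach r u s
      · exact ⟨s, Relation.ReflTransGen.refl, h⟩
      · push_neg at h
        obtain ⟨u, hsu, hus⟩ := h
        have hsub : {w | reach r u w} ⊂ {w | reach r s w} := by
          constructor
          · intro w hw
            exact reach_trans' hsu hw
          · intro hcon
            exact hus (hcon (Relation.ReflTransGen.refl : reach r s s))
        have hlt : Set.ncard {w | reach r u w} < Set.ncard {w | reach r s w} :=
          Set.ncard_lt_ncard hsub (Set.toFinite _)
        obtain ⟨t, hut, ht⟩ := ih u (by omega)
        exact ⟨t, reach_trans' hsu hut, ht⟩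
  exact key _ s le_rfl

lemma exists_attractor [Finite σ] (r : σ → σ → Prop) (s : σ) :
    ∃ A t, IsAttractor r A ∧ t ∈ A ∧ reach r s t := by
  obtain ⟨t, hst, hterm⟩ := exists_terminal r s
  refine ⟨{u | reach r t u}, t, ?_, Relation.ReflTransGen.refl, hst⟩
  intro u hu
  ext w
  simp only [Set.mem_setOf_eq]
  constructor
  · intro hw
    exact reach_trans' hu hw
  · intro hw
    exact reach_trans' (hterm u hu) hw

lemma attractor_eq' {r : σ → σ → Prop} {A A' : Set σ} (hA : IsAttractor r A)
    (hA' : IsAttractor r A') {x : σ} (hx : x ∈ A') (hxW : x ∈ basW r A) : A = A' := by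
  obtain ⟨y, hyA, hxy⟩ := hxW
  have hyA' : y ∈ A' := (Set.ext_iff.mp (hA' x hx) y).mp hxy
  rw [← hA y hyA, ← hA' y hyA']

lemma mem_basS' {r : σ → σ → Prop} {A : Set σ} {s : σ} :
    s ∈ basS r A ↔ s ∈ basW r A ∧
      ∀ A', IsAttractor r A' → A' ≠ A → s ∉ basW r A' := by
  simp only [basS, Set.mem_diff, Set.mem_iUnion, Set.mem_setOf_eq, not_exists]
  constructor
  · rintro ⟨h1, h2⟩
    exact ⟨h1, fun A' hA' hne hmem => h2 A' ⟨hA', hne⟩ hmem⟩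
  · rintro ⟨h1, h2⟩
    exact ⟨h1, fun A' hA' hmem => h2 A' hA'.1 hA'.2 hmem⟩

lemma mem_basSOn' {S : Set σ} {r : σ → σ → Prop} {A : Set σ} {s : σ} :
    s ∈ basSOn S r A ↔ s ∈ basWOn S r A ∧
      ∀ A', IsAttractorOn S r A' → A' ≠ A → s ∉ basWOn S r A' := by
  simp only [basSOn, Set.mem_diff, Set.mem_iUnion, Set.mem_setOf_eq, not_exists]
  constructor
  · rintro ⟨h1, h2⟩
    exact ⟨h1, fun A' hA' hne hmem => h2 A' ⟨hA', hne⟩ hmem⟩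
  · rintro ⟨h1, h2⟩
    exact ⟨h1, fun A' hA' hmem => h2 A' hA'.1 hA'.2 hmem⟩

lemma basS_fwd [Finite σ] {r : σ → σ → Prop} {A : Set σ} {s s' : σ}
    (hs : s ∈ basS r A) (h : r s s') : s' ∈ basS r A := by
  rw [mem_basS'] at hs ⊢
  obtain ⟨hW, hN⟩ := hs
  obtain ⟨A'', t, hA'', htA, hst⟩ := exists_attractor r s'
  have hA''eq : A'' = A := by
    by_contra hne
    exact hN A'' hA'' hne ⟨t, htA, Relation.ReflTransGen.head h hst⟩
  constructor
  · exact ⟨t, hA''eq ▸ htA, hst⟩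
  · intro A' hA' hne hmem
    obtain ⟨y, hy, hy'⟩ := hmem
    exact hN A' hA' hne ⟨y, hy, Relation.ReflTransGen.head h hy'⟩

lemma reach_restrict {S : Set σ} {r : σ → σ → Prop}
    (hcl : ∀ a ∈ S, ∀ b, r a b → b ∈ S) {s t : σ} (hs : s ∈ S) (h : reach r s t) :
    t ∈ S ∧ reach (rrestrict S r) s t := by
  induction h with
  | refl => exact ⟨hs, Relation.ReflTransGen.refl⟩
  | tail h1 h2 ih =>
    obtain ⟨hb, hr⟩ := ih
    have hc := hcl _ hb _ h2
    exact ⟨hc, hr.tail ⟨h2, hb, hc⟩⟩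

lemma reach_of_restrict {S : Set σ} {r : σ → σ → Prop} {s t : σ}
    (h : reach (rrestrict S r) s t) : reach r s t := by
  induction h with
  | refl => exact Relation.ReflTransGen.refl
  | tail _ h2 ih => exact ih.tail h2.1

lemma attractorOn_global {S : Set σ} {r : σ → σ → Prop}
    (hcl : ∀ a ∈ S, ∀ b, r a b → b ∈ S) {A' : Set σ}
    (h : IsAttractorOn S r A') : IsAttractor r A' := by
  intro u hu
  have huS : u ∈ S := h.1 hu
  ext t
  simp only [Set.mem_setOf_eq]
  constructor
  · intro ht
    exact (Set.ext_iff.mp (h.2 u hu) t).mp (reach_restrict hcl huS ht).2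
  · intro ht
    exact reach_of_restrict ((Set.ext_iff.mp (h.2 u hu) t).mpr ht)

lemma global_attractorOn {S : Set σ} {r : σ → σ → Prop}
    (hcl : ∀ a ∈ S, ∀ b, r a b → b ∈ S) {A' : Set σ} (h : IsAttractor r A')
    {t : σ} (ht : t ∈ A') (htS : t ∈ S) : IsAttractorOn S r A' := by
  have hsub : A' ⊆ S := by
    intro w hw
    have hrw : reach r t w := (Set.ext_iff.mp (h t ht) w).mpr hw
    exact (reach_restrict hcl htS hrw).1
  refine ⟨hsub, fun u hu => ?_⟩
  ext w
  simp only [Set.mem_setOf_eq]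
  constructor
  · intro hw
    exact (Set.ext_iff.mp (h u hu) w).mp (reach_of_restrict hw)
  · intro hw
    have hrw : reach r u w := (Set.ext_iff.mp (h u hu) w).mpr hw
    exact (reach_restrict hcl (hsub hu) hrw).2

end MyAux

lemma proj_update_mem {B : Set V} {s : V → Bool} {v : V} (hv : v ∈ B) (b : Bool) :
    proj B (Function.update s v b) = Function.update (proj B s) ⟨v, hv⟩ b := by
  funext u
  rcases u with ⟨u, hu⟩
  simp only [proj, Function.update_apply, Subtype.mk.injEq]

lemma proj_update_not_mem {B : Set V} {s : V → Bool} {v : V} (hv : v ∉ B) (b : Bool) :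
    proj B (Function.update s v b) = proj B s := by
  funext u
  rcases u with ⟨u, hu⟩
  simp only [proj, Function.update_apply]
  rw [if_neg]
  rintro rfl
  exact hv hu

lemma gstep_proj {f : (V → Bool) → V → Bool} {B : Set V} {s s' : V → Bool}
    (h : gstep f s s') : lstep f B (proj B s) (proj B s') ∨ proj B s' = proj B s := by
  obtain ⟨v, hv⟩ := h
  by_cases hvB : v ∈ B
  · left
    exact ⟨⟨v, hvB⟩, s, rfl, by rw [hv, proj_update_mem hvB]⟩
  · right
    rw [hv, proj_update_not_mem hvB]

lemma reach_proj {f : (V → Bool) → V → Bool} {B : Set V} {s t : V → Bool}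
    (h : reach (gstep f) s t) : reach (lstep f B) (proj B s) (proj B t) := by
  induction h with
  | refl => exact Relation.ReflTransGen.refl
  | tail _ h2 ih =>
    rcases gstep_proj (B := B) h2 with h | h
    · exact ih.tail h
    · rwa [h]

lemma lstep_lift {f : (V → Bool) → V → Bool} {B : Set V} (hB : Elem f B)
    {x x' : {v // v ∈ B} → Bool} (h : lstep f B x x') (s : V → Bool) (hs : proj B s = x) :
    ∃ s', gstep f s s' ∧ proj B s' = x' := by
  obtain ⟨v, s₀, hs₀, hx'⟩ := h
  refine ⟨Function.update s v.1 (f s v.1), ⟨v.1, rfl⟩, ?_⟩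
  have hfv : f s v.1 = f s₀ v.1 := by
    apply hB v.1 v.2
    intro u hu
    exact congrFun (hs.trans hs₀.symm) ⟨u, hu⟩
  rw [proj_update_mem v.2, hs, hx', hfv]

lemma reach_lift {f : (V → Bool) → V → Bool} {B : Set V} (hB : Elem f B)
    {x y : {v // v ∈ B} → Bool} (h : reach (lstep f B) x y) :
    ∀ s : V → Bool, proj B s = x → ∃ t, reach (gstep f) s t ∧ proj B t = y := by
  induction h with
  | refl => exact fun s hs => ⟨s, Relation.ReflTransGen.refl, hs⟩
  | tail _ h2 ih =>
    intro s hs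
    obtain ⟨t, hst, hpt⟩ := ih s hs
    obtain ⟨t', htt', hpt'⟩ := lstep_lift hB h2 t hpt
    exact ⟨t', hst.tail htt', hpt'⟩

/-- Let `B1` be an elementary block (parent of the non-elementary block `B2`, `V = B1 ∪ B2`),
`A1` an attractor of `TS_{B1}`, and `TS_2` the transition system of `B2` generated by
`basS(A1)`. If `A` is an attractor of `TS_2`, then the strong basin of `A` computed in `TS_2`
equals the strong basin of `A` in the global transition system, and also equals
`basS(A1) ⊗ basS_{TS_2}(A)`. -/
theorem stmt16 (f : (V → Bool) → V → Bool) (B1 B2 : Set V)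
    (hcov : B1 ∪ B2 = Set.univ) (hB1 : Elem f B1) (hB2 : ¬ Elem f B2)
    (A1 : Set ({v // v ∈ B1} → Bool)) (hA1 : IsAttractor (lstep f B1) A1)
    (A : Set (V → Bool))
    (hA : IsAttractorOn {s | proj B1 s ∈ basS (lstep f B1) A1} (gstep f) A) :
    basSOn {s | proj B1 s ∈ basS (lstep f B1) A1} (gstep f) A = basS (gstep f) A ∧
    basS (gstep f) A =
      {s | proj B1 s ∈ basS (lstep f B1) A1 ∧
           s ∈ basSOn {s | proj B1 s ∈ basS (lstep f B1) A1} (gstep f) A} := by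
  classical
  set S : Set (V → Bool) := {s | proj B1 s ∈ basS (lstep f B1) A1} with hSdef
  -- S is forward closed under gstep
  have hcl : ∀ a ∈ S, ∀ b, gstep f a b → b ∈ S := by
    intro a ha b hab
    rcases gstep_proj (B := B1) hab with h | h
    · exact basS_fwd ha h
    · show proj B1 b ∈ basS (lstep f B1) A1
      rw [h]
      exact ha
  have hAS : A ⊆ S := hA.1
  have hmain : basSOn S (gstep f) A = basS (gstep f) A := by
    ext s
    rw [mem_basSOn', mem_basS']
    constructor
    · rintro ⟨⟨hsS, t, htA, hst⟩, hno⟩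
      refine ⟨⟨t, htA, reach_of_restrict hst⟩, ?_⟩
      rintro A' hA' hne ⟨t', ht', hst'⟩
      have ht'S : t' ∈ S := (reach_restrict hcl hsS hst').1
      have hon : IsAttractorOn S (gstep f) A' := global_attractorOn hcl hA' ht' ht'S
      exact hno A' hon hne ⟨hsS, t', ht', (reach_restrict hcl hsS hst').2⟩
    · rintro ⟨hW, hno⟩
      have hsS : s ∈ S := by
        obtain ⟨t, htA, hst⟩ := hW
        have htS : t ∈ S := hAS htA
        show proj B1 s ∈ basS (lstep f B1) A1
        rw [mem_basS']
        constructor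
        · obtain ⟨y, hy, hty⟩ := (mem_basS'.mp htS).1
          exact ⟨y, hy, reach_trans' (reach_proj hst) hty⟩
        · rintro A1' hA1' hne ⟨y, hyA1', hry⟩
          obtain ⟨u, hsu, hpu⟩ := reach_lift hB1 hry s rfl
          obtain ⟨A'', w, hA'', hwA'', huw⟩ := exists_attractor (gstep f) u
          have hpw : proj B1 w ∈ A1' := by
            have hproj := reach_proj (B := B1) huw
            rw [hpu] at hproj
            exact (Set.ext_iff.mp (hA1' y hyA1') _).mp hproj
          have hwS : w ∉ S := by
            intro hwS
            have hbw : proj B1 w ∈ basW (lstep f B1) A1 := (mem_basS'.mp hwS).1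
            exact hne (attractor_eq' hA1 hA1' hpw hbw).symm
          have hwA : w ∉ A := fun h => hwS (hAS h)
          have hA''ne : A'' ≠ A := fun h => hwA (h ▸ hwA'')
          exact hno A'' hA'' hA''ne ⟨w, hwA'', reach_trans' hsu huw⟩
      refine ⟨⟨hsS, ?_⟩, ?_⟩
      · obtain ⟨t, htA, hst⟩ := hW
        exact ⟨t, htA, (reach_restrict hcl hsS hst).2⟩
      · rintro A' hA'on hne ⟨_, t, htA', hst⟩
        have hglob : IsAttractor (gstep f) A' := attractorOn_global hcl hA'on
        exact hno A' hglob hne ⟨t, htA', reach_of_restrict hst⟩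
  refine ⟨hmain, ?_⟩
  rw [← hmain]
  ext s
  constructor
  · intro h
    exact ⟨h.1.1, h⟩
  · rintro ⟨_, h⟩
    exact h
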